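/- arXiv:2211.07487 — 4 statements merged into one kernel-verified Lean document; each statement's English description precedes it below -/
import Mathlib

section
/- Every orthogonal factorization system on a category is also a weak factorization system; conversely, a weak factorization system (L, R) is an orthogonal factorization system if and only if for every map f in L the codiagonal ∇_f also lies in L. -/
open CategoryTheory CategoryTheory.Limits

variable {C : Type u} [Category.{v} C]

/-- The codiagonal `∇_f : B +_A B ⟶ B` of `f : A ⟶ B`. -/
noncomputable def codiagonal [HasPushouts C] {A B : C} (f : A ⟶ B) :
    pushout f f ⟶ B :=
  pushout.desc (𝟙 B) (𝟙 B) rfl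

/-- `l` has the (weak) left lifting property with respect to `r`. -/
def HasWeakLift {A B X Y : C} (l : A ⟶ B) (r : X ⟶ Y) : Prop :=
  ∀ (f : A ⟶ X) (g : B ⟶ Y), f ≫ r = l ≫ g →
    ∃ h : B ⟶ X, l ≫ h = f ∧ h ≫ r = g

/-- `l` has the unique left lifting property with respect to `r`. -/
def HasUniqueLift {A B X Y : C} (l : A ⟶ B) (r : X ⟶ Y) : Prop :=
  ∀ (f : A ⟶ X) (g : B ⟶ Y), f ≫ r = l ≫ g →
    ∃! h : B ⟶ X, l ≫ h = f ∧ h ≫ r = g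

/-- `(L, R)` is a weak factorization system. -/
def IsWFS (L R : MorphismProperty C) : Prop :=
  (∀ {A B : C} (l : A ⟶ B),
      L l ↔ ∀ {X Y : C} (r : X ⟶ Y), R r → HasWeakLift l r) ∧
  (∀ {X Y : C} (r : X ⟶ Y),
      R r ↔ ∀ {A B : C} (l : A ⟶ B), L l → HasWeakLift l r) ∧
  (∀ {A B : C} (f : A ⟶ B),
      ∃ (Z : C) (g : A ⟶ Z) (h : Z ⟶ B), L g ∧ R h ∧ g ≫ h = f)

/-- `(L, R)` is an orthogonal factorization system. -/
def IsOFS (L R : MorphismProperty C) : Prop :=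
  (∀ {A B : C} (l : A ⟶ B),
      L l ↔ ∀ {X Y : C} (r : X ⟶ Y), R r → HasUniqueLift l r) ∧
  (∀ {X Y : C} (r : X ⟶ Y),
      R r ↔ ∀ {A B : C} (l : A ⟶ B), L l → HasUniqueLift l r) ∧
  (∀ {A B : C} (f : A ⟶ B),
      ∃ (Z : C) (g : A ⟶ Z) (h : Z ⟶ B), L g ∧ R h ∧ g ≫ h = f)

/-!
In an orthogonal system, a map with the weak lifting property against `R` is a retract of its
`(L, R)`-factorization (lift in the square `(g, 𝟙 B)` against `h`), and unique lifting passes to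
retracts. In a weak system, two lifts `t₁, t₂` of one square against `r` glue to
`B +_A B ⟶ X`, and any lift of the glued square against `∇_l` equals both; conversely,
orthogonality of `l` to `r` passes to `∇_l`.
-/

variable {A B X Y : C} {l : A ⟶ B} {r : X ⟶ Y}

lemma HasUniqueLift.hasWeakLift (h : HasUniqueLift l r) : HasWeakLift l r :=
  fun f g sq => (h f g sq).exists

lemma HasUniqueLift.of_retract_left {Z : C} {g : A ⟶ Z} {h : Z ⟶ B} {k : B ⟶ Z}
    (hg : HasUniqueLift g r) (hgh : g ≫ h = l) (hlk : l ≫ k = g) (hkh : k ≫ h = 𝟙 B) :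
    HasUniqueLift l r := by
  intro f v sq
  obtain ⟨d, ⟨hd₁, hd₂⟩, hd⟩ := hg f (h ≫ v) (by rw [sq, ← hgh, Category.assoc])
  refine ⟨k ≫ d, ⟨by rw [← Category.assoc, hlk, hd₁], by rw [Category.assoc, hd₂,
    ← Category.assoc, hkh, Category.id_comp]⟩, fun t ⟨ht₁, ht₂⟩ => ?_⟩
  have hht : h ≫ t = d := hd _ ⟨by rw [← Category.assoc, hgh, ht₁], by rw [Category.assoc, ht₂]⟩
  rw [← hht, ← Category.assoc, hkh, Category.id_comp]

lemma HasUniqueLift.of_retract_right {Z : C} {g : X ⟶ Z} {h : Z ⟶ Y} {k : Z ⟶ X}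
    (hh : HasUniqueLift l h) (hgh : g ≫ h = r) (hkr : k ≫ r = h) (hgk : g ≫ k = 𝟙 X) :
    HasUniqueLift l r := by
  intro f v sq
  obtain ⟨d, ⟨hd₁, hd₂⟩, hd⟩ := hh (f ≫ g) v (by rw [Category.assoc, hgh, sq])
  refine ⟨d ≫ k, ⟨by rw [← Category.assoc, hd₁, Category.assoc, hgk, Category.comp_id],
    by rw [Category.assoc, hkr, hd₂]⟩, fun t ⟨ht₁, ht₂⟩ => ?_⟩
  have htg : t ≫ g = d := hd _ ⟨by rw [← Category.assoc, ht₁], by rw [Category.assoc, hgh, ht₂]⟩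
  rw [← htg, Category.assoc, hgk, Category.comp_id]

section Codiagonal

variable [HasPushouts C]

lemma inl_codiagonal (l : A ⟶ B) : pushout.inl l l ≫ codiagonal l = 𝟙 B :=
  pushout.inl_desc _ _ _

lemma inr_codiagonal (l : A ⟶ B) : pushout.inr l l ≫ codiagonal l = 𝟙 B :=
  pushout.inr_desc _ _ _

lemma HasWeakLift.eq_of_codiagonal (h : HasWeakLift (codiagonal l) r) {t₁ t₂ : B ⟶ X}
    (hl : l ≫ t₁ = l ≫ t₂) (hr : t₁ ≫ r = t₂ ≫ r) : t₁ = t₂ := by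
  obtain ⟨d, hd, -⟩ := h (pushout.desc t₁ t₂ hl) (t₁ ≫ r) (by
    ext <;> simp [codiagonal, pushout.inl_desc_assoc, pushout.inr_desc_assoc, hr])
  have h₁ := congrArg (pushout.inl l l ≫ ·) hd
  have h₂ := congrArg (pushout.inr l l ≫ ·) hd
  simp only [← Category.assoc, inl_codiagonal, inr_codiagonal, Category.id_comp,
    pushout.inl_desc, pushout.inr_desc] at h₁ h₂
  rw [← h₁, h₂]

lemma hasUniqueLift_of_hasWeakLift_codiagonal (h : HasWeakLift l r)
    (hcd : HasWeakLift (codiagonal l) r) : HasUniqueLift l r := by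
  intro f g sq
  obtain ⟨d, hd₁, hd₂⟩ := h f g sq
  exact ⟨d, ⟨hd₁, hd₂⟩, fun t ⟨ht₁, ht₂⟩ => hcd.eq_of_codiagonal (ht₁.trans hd₁.symm)
    (ht₂.trans hd₂.symm)⟩

/-- `codiagonal l` is split epi, so lifts along it are unique; they exist because uniqueness of
lifts along `l` forces the two restrictions of the top map to agree. -/
lemma hasUniqueLift_codiagonal (h : HasUniqueLift l r) : HasUniqueLift (codiagonal l) r := by
  intro u v sq
  have hsq : ∀ i : B ⟶ pushout l l, i ≫ codiagonal l = 𝟙 B → (i ≫ u) ≫ r = v := fun i hi => by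
    rw [Category.assoc, sq, ← Category.assoc, hi, Category.id_comp]
  have hinl := hsq _ (inl_codiagonal l)
  have hinr := hsq _ (inr_codiagonal l)
  have hu : pushout.inl l l ≫ u = pushout.inr l l ≫ u :=
    (h (l ≫ pushout.inl l l ≫ u) v (by rw [Category.assoc, hinl])).unique ⟨rfl, hinl⟩
      ⟨by rw [← Category.assoc, ← pushout.condition, Category.assoc], hinr⟩
  refine ⟨pushout.inl l l ≫ u, ⟨?_, hinl⟩, fun t ht => ?_⟩
  · ext <;> simp [codiagonal, pushout.inl_desc_assoc, pushout.inr_desc_assoc, hu]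
  · rw [← ht.1, ← Category.assoc, inl_codiagonal, Category.id_comp]

end Codiagonal

variable {L R : MorphismProperty C}

lemma IsOFS.hasUniqueLift (hO : IsOFS L R) (hl : L l) (hr : R r) : HasUniqueLift l r :=
  (hO.1 l).1 hl r hr

lemma IsWFS.hasWeakLift (hW : IsWFS L R) (hl : L l) (hr : R r) : HasWeakLift l r :=
  (hW.1 l).1 hl r hr

lemma IsOFS.left_of_hasWeakLift (hO : IsOFS L R)
    (hlift : ∀ {X Y : C} (r : X ⟶ Y), R r → HasWeakLift l r) : L l := by
  obtain ⟨Z, g, h, hg, hh, hgh⟩ := hO.2.2 l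
  obtain ⟨k, hlk, hkh⟩ := hlift h hh g (𝟙 B) (by rw [hgh, Category.comp_id])
  exact (hO.1 l).2 fun r hr => (hO.hasUniqueLift hg hr).of_retract_left hgh hlk hkh

lemma IsOFS.right_of_hasWeakLift (hO : IsOFS L R)
    (hlift : ∀ {A B : C} (l : A ⟶ B), L l → HasWeakLift l r) : R r := by
  obtain ⟨Z, g, h, hg, hh, hgh⟩ := hO.2.2 r
  obtain ⟨k, hgk, hkr⟩ := hlift g hg (𝟙 X) h (by rw [hgh, Category.id_comp])
  exact (hO.2.1 r).2 fun l hl => (hO.hasUniqueLift hl hh).of_retract_right hgh hkr hgk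

lemma IsOFS.isWFS (hO : IsOFS L R) : IsWFS L R :=
  ⟨fun _ => ⟨fun hl _ _ _ hr => (hO.hasUniqueLift hl hr).hasWeakLift, hO.left_of_hasWeakLift⟩,
    fun _ => ⟨fun hr _ _ _ hl => (hO.hasUniqueLift hl hr).hasWeakLift, hO.right_of_hasWeakLift⟩,
    hO.2.2⟩

lemma IsWFS.isOFS_of_hasUniqueLift (hW : IsWFS L R)
    (huniq : ∀ {A B X Y : C} (l : A ⟶ B) (r : X ⟶ Y), L l → R r → HasUniqueLift l r) :
    IsOFS L R :=
  ⟨fun l => ⟨fun hl _ _ r hr => huniq _ r hl hr,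
      fun h => (hW.1 l).2 fun r hr => (h r hr).hasWeakLift⟩,
    fun r => ⟨fun hr _ _ l hl => huniq l _ hl hr,
      fun h => (hW.2.1 r).2 fun l hl => (h l hl).hasWeakLift⟩,
    hW.2.2⟩

/-- Every orthogonal factorization system is a weak factorization system, and a
weak factorization system `(L, R)` is orthogonal if and only if `L` is stable
under codiagonals. -/
theorem ofs_is_wfs_and_wfs_ofs_iff_codiagonal [HasPushouts C] :
    (∀ L R : MorphismProperty C, IsOFS L R → IsWFS L R) ∧
    (∀ L R : MorphismProperty C, IsWFS L R →
      (IsOFS L R ↔ ∀ {A B : C} (f : A ⟶ B), L f → L (codiagonal f))) := by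
  refine ⟨fun L R hO => hO.isWFS, fun L R hW => ⟨fun hO A B f hf => ?_, fun hcd => ?_⟩⟩
  · exact (hO.1 _).2 fun r hr => hasUniqueLift_codiagonal (hO.hasUniqueLift hf hr)
  · exact hW.isOFS_of_hasUniqueLift fun _ _ hl hr =>
      hasUniqueLift_of_hasWeakLift_codiagonal (hW.hasWeakLift hl hr)
        (hW.hasWeakLift (hcd _ hl) hr)
end

section
/- Given a type A with a reflexive relational equivalence structure—i.e. a binary type-valued relation E : A → A → Type with a reflexivity term refl : ∀ a, E a a, such that for every a the type Σ (b : A), E a b is contractible and for every b the type Σ (a : A), E a b is contractible—and a type family P : A → Type with a dependent equivalence T : ∀ x y, E x y → (P x ≃ P y) (relational equivalences between fibers), one can construct a based path-induction (J) eliminator: for every a : A, motive Q : (y : A) → E a y → Type, and d : Q a (refl a), there exists j : ∀ y (p : E a y), Q y p together with a proof that j a (refl a) is related to d by the identity type of Q a (refl a). -/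
/-!
Contractibility of `Σ b, E a b` makes it a subsingleton, so every `⟨y, p⟩` is identified with
`⟨a, refl a⟩`; transporting `d` along that identification defines `j`, and the computation rule
holds definitionally because the identification of `⟨a, refl a⟩` with itself is `rfl`.
-/

theorem exists_pi_eq_of_subsingleton {S : Sort*} [Subsingleton S] (Q : S → Sort*) (s₀ : S)
    (d : Q s₀) : ∃ j : ∀ s, Q s, j s₀ = d :=
  ⟨fun s => Subsingleton.elim s₀ s ▸ d, rfl⟩

theorem J_from_reflexive_equivalence_general {A : Type u}
    (E : A → A → Type v) (refl : ∀ a : A, E a a)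
    (hfunR : ∀ a : A, ∃ c : Σ b : A, E a b, ∀ z : Σ b : A, E a b, z = c)
    (a : A) (Q : ∀ y : A, E a y → Type z) (d : Q a (refl a)) :
    ∃ j : ∀ (y : A) (p : E a y), Q y p, j a (refl a) = d := by
  obtain ⟨c, hc⟩ := hfunR a
  have : Subsingleton (Σ b : A, E a b) := subsingleton_of_forall_eq c hc
  obtain ⟨j, hj⟩ :=
    exists_pi_eq_of_subsingleton (fun s : Σ b : A, E a b => Q s.1 s.2) ⟨a, refl a⟩ d
  exact ⟨fun y p => j ⟨y, p⟩, hj⟩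

/-- Based path induction (a weak `J` eliminator) can be constructed from a
reflexive relational equivalence structure together with dependent
equivalences: given a reflexive relation `E` on `A` whose total spaces in both
directions are contractible, and a family `P` with equivalences of fibers
`T x y : E x y → (P x ≃ P y)`, then for every `a`, motive `Q` and
`d : Q a (refl a)`, there is `j : ∀ y p, Q y p` with `j a (refl a)` identified
with `d`. -/
theorem J_from_reflexive_equivalence {A : Type u}
    (E : A → A → Type v) (refl : ∀ a : A, E a a)
    (hfunR : ∀ a : A, ∃ c : Σ b : A, E a b, ∀ z : Σ b : A, E a b, z = c)
    (hfunL : ∀ b : A, ∃ c : Σ a : A, E a b, ∀ z : Σ a : A, E a b, z = c)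
    (P : A → Type w) (T : ∀ x y : A, E x y → (P x ≃ P y))
    (a : A) (Q : ∀ y : A, E a y → Type z) (d : Q a (refl a)) :
    ∃ j : ∀ (y : A) (p : E a y), Q y p, j a (refl a) = d :=
  J_from_reflexive_equivalence_general E refl hfunR a Q d
end

section
/- Relational equivalences are closed under dependent sums: given A, A' types with a relational equivalence R_A : A → A' → Type, and type families B : A → Type, B' : A' → Type with a family of relational equivalences R_B : ∀ a a', R_A a a' → (B a → B' a' → Type) (each R_B a a' r being a relational equivalence between B a and B' a'), the relation on Σ A B and Σ A' B' given by ((a,b),(a',b')) ↦ Σ (r : R_A a a'), R_B a a' r b b' is a relational equivalence. -/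
/-- A type is contractible if it has a point to which every point is equal. -/
def IsContrT (X : Type u) : Prop := ∃ c : X, ∀ y : X, y = c

/-- A relational equivalence between `X` and `Y`: a type-valued relation whose
total spaces in both directions are contractible. -/
def IsRelEquiv {X : Type u} {Y : Type v} (R : X → Y → Type w) : Prop :=
  (∀ x : X, IsContrT (Σ y : Y, R x y)) ∧ (∀ y : Y, IsContrT (Σ x : X, R x y))

/-!
Fix `(a, b)`. Reassociating, the total space of the Σ-relation over `(a, b)` is the Σ-type over the
contractible `Σ a', R_A a a'` of the contractible fibres `Σ b', R_B a a' r b b'`, hence contractible.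
The other direction is the same argument applied to the flipped relations.
-/

theorem IsContrT.of_equiv {X : Type u} {Y : Type v} (e : X ≃ Y) (h : IsContrT X) : IsContrT Y := by
  obtain ⟨c, hc⟩ := h
  exact ⟨e c, fun y => by rw [← e.apply_symm_apply y, hc (e.symm y)]⟩

theorem IsContrT.sigma {X : Type u} {Y : X → Type v} (hX : IsContrT X)
    (hY : ∀ x, IsContrT (Y x)) : IsContrT (Σ x, Y x) := by
  obtain ⟨c, hc⟩ := hX
  choose y₀ hy₀ using hY
  refine ⟨⟨c, y₀ c⟩, ?_⟩
  rintro ⟨x, y⟩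
  obtain rfl := hc x
  rw [hy₀ x y]

def sigmaRelTotalEquiv {A : Type u} {A' : Type u'} (RA : A → A' → Type w)
    (B : A → Type v) (B' : A' → Type v')
    (RB : ∀ (a : A) (a' : A'), RA a a' → (B a → B' a' → Type w')) (a : A) (b : B a) :
    (Σ q : Σ a', RA a a', Σ b', RB a q.1 q.2 b b') ≃
      Σ p' : Σ a', B' a', Σ r : RA a p'.1, RB a p'.1 r b p'.2 where
  toFun := fun ⟨⟨a', r⟩, b', s⟩ => ⟨⟨a', b'⟩, r, s⟩
  invFun := fun ⟨⟨a', b'⟩, r, s⟩ => ⟨⟨a', r⟩, b', s⟩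
  left_inv := fun _ => rfl
  right_inv := fun _ => rfl

theorem isContrT_sigmaRel_total {A : Type u} {A' : Type u'}
    (RA : A → A' → Type w) (hRA : ∀ a, IsContrT (Σ a', RA a a'))
    (B : A → Type v) (B' : A' → Type v')
    (RB : ∀ (a : A) (a' : A'), RA a a' → (B a → B' a' → Type w'))
    (hRB : ∀ a a' r b, IsContrT (Σ b', RB a a' r b b')) (p : Σ a, B a) :
    IsContrT (Σ p' : Σ a', B' a', Σ r : RA p.1 p'.1, RB p.1 p'.1 r p.2 p'.2) :=
  (IsContrT.sigma (hRA p.1) fun q => hRB p.1 q.1 q.2 p.2).of_equiv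
    (sigmaRelTotalEquiv RA B B' RB p.1 p.2)

/-- Relational equivalences are closed under dependent sums: given a relational
equivalence `R_A` between `A` and `A'`, and a family of relational equivalences
`R_B a a' r` between `B a` and `B' a'` for each `r : R_A a a'`, the induced
relation on `Σ A B` and `Σ A' B'` is a relational equivalence. -/
theorem relEquiv_sigma {A : Type u} {A' : Type u'}
    (RA : A → A' → Type w) (hRA : IsRelEquiv RA)
    (B : A → Type v) (B' : A' → Type v')
    (RB : ∀ (a : A) (a' : A'), RA a a' → (B a → B' a' → Type w'))
    (hRB : ∀ (a : A) (a' : A') (r : RA a a'), IsRelEquiv (RB a a' r)) :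
    IsRelEquiv (fun (p : Σ a : A, B a) (p' : Σ a' : A', B' a') =>
      Σ r : RA p.1 p'.1, RB p.1 p'.1 r p.2 p'.2) :=
  ⟨isContrT_sigmaRel_total RA hRA.1 B B' RB fun a a' r => (hRB a a' r).1,
    isContrT_sigmaRel_total (fun a' a => RA a a') hRA.2 B' B
      (fun a' a r b' b => RB a a' r b b') fun a' a r => (hRB a a' r).2⟩
end

section
/- Relational equivalences are closed under dependent products along contractible relations: given a type X, Y : X → Type a family of contractible types, A : X → Type, and B : (x : X) → Y x → A x → Type such that for all x and y the type Σ (a : A x), B x y a is contractible, the type Σ (a : ∀ x, A x), (∀ (x : X) (y : Y x), B x y (a x)) is contractible. -/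
namespace IsContrT

theorem of_equiv_s10 {X : Type u} {Y : Type v} (e : X ≃ Y) (h : IsContrT X) : IsContrT Y := by
  obtain ⟨c, hc⟩ := h
  exact ⟨e c, fun y => e.symm_apply_eq.mp (hc _)⟩

theorem pi {X : Type u} {A : X → Type v} (h : ∀ x, IsContrT (A x)) : IsContrT (∀ x, A x) := by
  choose c hc using h
  exact ⟨c, fun f => funext fun x => hc x (f x)⟩

theorem sigma_forall {Y : Type u} {A : Type v} {B : Y → A → Type w} (hY : IsContrT Y)
    (hB : ∀ y, IsContrT (Σ a, B y a)) : IsContrT (Σ a, ∀ y, B y a) := by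
  obtain ⟨c, hc⟩ := hY
  let _ : Unique Y := { default := c, uniq := hc }
  exact (hB c).of_equiv_s10 (Equiv.sigmaCongrRight fun a => Equiv.piUnique (B · a)).symm

end IsContrT

def Equiv.sigmaPiEquivPiSigma {X : Type u} {A : X → Type v} (P : ∀ x, A x → Type w) :
    (Σ a : ∀ x, A x, ∀ x, P x (a x)) ≃ ∀ x, Σ a : A x, P x a where
  toFun f x := ⟨f.1 x, f.2 x⟩
  invFun f := ⟨fun x => (f x).1, fun x => (f x).2⟩
  left_inv _ := rfl
  right_inv _ := rfl

/-- Closure condition `contr_Π`: given a family `Y` of contractible types over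
`X`, and families `A`, `B` such that `Σ (a : A x), B x y a` is contractible for
all `x`, `y`, the type `Σ (a : ∀ x, A x), ∀ x y, B x y (a x)` is contractible. -/
theorem contr_pi {X : Type u} (Y : X → Type v) (hY : ∀ x, IsContrT (Y x))
    (A : X → Type w) (B : ∀ x : X, Y x → A x → Type z)
    (hB : ∀ (x : X) (y : Y x), IsContrT (Σ a : A x, B x y a)) :
    IsContrT (Σ a : ∀ x : X, A x, ∀ (x : X) (y : Y x), B x y (a x)) :=
  (IsContrT.pi fun x => (hY x).sigma_forall (hB x)).of_equiv_s10
    (Equiv.sigmaPiEquivPiSigma fun x a => ∀ y : Y x, B x y a).symm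
end
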